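/- For all n \ge 2, the polynomial identity (-q^2;q)_n \cdot [n]_q! = [2]_q [3]_{-q} [4]_q \prod_{k=3}^{n} ([2k+1]_q - q^k) holds in \mathbb{Z}[q] (for n = 2 the empty product is 1). -/
import Mathlib


open Polynomial Finset

/-- The q-integer `[k]_p = 1 + p + ⋯ + p^(k-1)` evaluated at a polynomial `p`. -/
noncomputable def qint (p : Polynomial ℤ) (k : ℕ) : Polynomial ℤ := ∑ i ∈ Finset.range k, p ^ i

lemma qint_mul (k : ℕ) : qint X k * (X - 1) = X ^ k - 1 := geom_sum_mul X k

lemma key (n : ℕ) :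
    (1 + X ^ (n + 2)) * qint X (n + 1) = qint X (2 * (n + 1) + 1) - X ^ (n + 1) := by
  have hX : (X - 1 : Polynomial ℤ) ≠ 0 := fun h => by simpa using congrArg (eval 0) h
  apply mul_right_cancel₀ hX
  rw [mul_assoc, qint_mul, sub_mul, qint_mul]
  ring

/-- `(-q²;q)_n ⋅ [n]_q! = [2]_q [3]_{-q} [4]_q ∏_{k=3}^{n} ([2k+1]_q - q^k)` in `ℤ[q]`,
for all `n ≥ 2`. -/
theorem stmt_19 (n : ℕ) (hn : 2 ≤ n) :
    (∏ k ∈ Finset.range n, (1 + X ^ (k + 2))) * (∏ k ∈ Finset.Icc 1 n, qint X k) =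
      qint X 2 * qint (-X) 3 * qint X 4 *
        ∏ k ∈ Finset.Icc 3 n, (qint X (2 * k + 1) - X ^ k) := by
  induction n, hn using Nat.le_induction with
  | base =>
    simp [qint, Finset.prod_range_succ, show Finset.Icc 1 2 = {1, 2} from rfl,
      Finset.sum_range_succ, Finset.Icc_eq_empty_of_lt (by norm_num : (2:ℕ) < 3)]
    ring
  | succ n hn ih =>
    rw [Finset.prod_range_succ, Finset.prod_Icc_succ_top (by omega),
      Finset.prod_Icc_succ_top (by omega), mul_mul_mul_comm, key n, ih]
    ring
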